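/- arXiv:2511.00257 — 2 statements merged into one kernel-verified Lean document; each statement's English description precedes it below -/
import Mathlib

section
/- In the reduced BwE setting, let S be any strategy in the pool, let u* ∈ {0, 1, …, k} be its special batch, and let T* be any horizon. For any learner, let T_{u*} denote the (random) number of rounds t ∈ {1, …, T*} in which the learner pulls an arm of batch u* (where arm 0 constitutes batch 0). Then the learner's pseudo-regret over T* rounds against S satisfies R_{T*} ≥ (ε/2)·E[ T* − T_{u*} ]. -/
open scoped BigOperators ENNReal

/-! ## The reduced BwE setting

There are `K = 2k+1` arms: arm `0` (encoded `none`) and arms `(u,i)` for `u ∈ [k]`,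
`i ∈ {0,1}` (encoded `some (u, i)`), and `N = kn+1` experts: expert `0` (encoded `none`,
always advising arm `0`) and experts `(u,v)` for `u ∈ [k]`, `v ∈ [n]`
(encoded `some (u, v)`, advising arm `(u, a_t^{(u,v)})`). -/

/-- An arm: `none` is arm `0`, `some (u, i)` is arm `(u,i)` of batch `u`. -/
abbrev RArm (k : ℕ) := Option (Fin k × Bool)

/-- The advice state: for each batch `u`, the advice vector `a^{(u)} ∈ {0,1}ⁿ`. -/
abbrev RAdviceM (k n : ℕ) := Fin k → Fin n → Bool

/-- An expert: `none` is expert `0`, `some (u, v)` is expert `(u,v)` of batch `u`. -/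
abbrev RExpert (k n : ℕ) := Option (Fin k × Fin n)

/-- The loss state of a round: the correct arm `c_u` of every batch `u` (the arm
`(u, c_u)` has loss `0` and the arm `(u, ¬c_u)` has loss `1`), together with the
binary loss of arm `0`. -/
abbrev RLossState (k : ℕ) := (Fin k → Bool) × Bool

/-- A full record of one round: the advice state, the loss state, and the pulled arm. -/
abbrev RRecord (k n : ℕ) := RAdviceM k n × RLossState k × RArm k

/-- What the learner observes in one round: the advice state, the arm it pulled,
and the loss of that arm only. -/
abbrev RObs (k n : ℕ) := RAdviceM k n × RArm k × Bool

/-- A strategy from the pool: `none` is `S_0`, and `some (u*, v*)` is `S_{(u*,v*)}`. -/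
abbrev RStrategy (k n : ℕ) := Option (Fin k × Fin n)

/-- The `{0,1}`-loss (as a `Bool`, `true` = loss `1`) of an arm, given the loss state. -/
def armLoss {k : ℕ} (L : RLossState k) : RArm k → Bool
  | none => L.2
  | some (u, i) => if i = L.1 u then false else true

/-- The loss of an arm as a real number in `{0,1}`. -/
noncomputable def lossVal (b : Bool) : ℝ := if b then 1 else 0

/-- The batch of an arm (`none` = batch `0`). -/
def armBatch {k : ℕ} : RArm k → Option (Fin k) := Option.map Prod.fst

/-- The arm advised by an expert, given the advice state. -/
def expertArm {k n : ℕ} (A : RAdviceM k n) : RExpert k n → RArm k :=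
  Option.map fun p => (p.1, A p.1 p.2)

/-- The special batch of a strategy: batch `0` (i.e. `none`) for `S_0`,
and batch `u*` for `S_{(u*,v*)}`. -/
def specialBatch {k n : ℕ} : RStrategy k n → Option (Fin k) := Option.map Prod.fst

/-- Density of the advice process given the history (most recent record first):
in the first round the advice state is uniform; afterwards, batch `u`'s advice vector
is resampled uniformly from `{0,1}ⁿ` if an arm of batch `u` was pulled in the previous
round, and is kept unchanged otherwise. -/
noncomputable def adviceDensity {k n : ℕ} (hist : List (RRecord k n)) (A : RAdviceM k n) : ℝ :=
  match hist with
  | [] => (1 / 2 : ℝ) ^ (k * n)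
  | r :: _ =>
      ∏ u : Fin k,
        if armBatch r.2.2 = some u then (1 / 2 : ℝ) ^ n
        else if A u = r.1 u then 1 else 0

/-- Density of the correct arm of batch `u`: uniform under `S_0` and for all
non-special batches; under `S_{(u*,v*)}` the correct arm of batch `u*` equals
the advice `a^{(u*,v*)}` of expert `(u*,v*)` with probability `1/2 + ε`. -/
noncomputable def batchFactor {k n : ℕ} (ε : ℝ) (s : RStrategy k n) (A : RAdviceM k n)
    (c : Fin k → Bool) (u : Fin k) : ℝ :=
  match s with
  | none => 1 / 2
  | some (u', v') =>
      if u = u' then (if c u = A u v' then 1 / 2 + ε else 1 / 2 - ε) else 1 / 2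

/-- Density of the loss state: arm `0` has loss `1` with probability `1/2 − ε/2`
(i.e. `ℓ_t(0) ∼ Ber(1/2 − ε/2)`), and the correct arms are drawn independently
according to `batchFactor`. -/
noncomputable def lossDensity {k n : ℕ} (ε : ℝ) (s : RStrategy k n) (A : RAdviceM k n)
    (L : RLossState k) : ℝ :=
  (if L.2 then 1 / 2 - ε / 2 else 1 / 2 + ε / 2) * ∏ u : Fin k, batchFactor ε s A L.1 u

/-- Density of the adversary's round output (advice state and loss state) given the
history, under strategy `s` with bias `ε`. -/
noncomputable def stratDensity {k n : ℕ} (ε : ℝ) (s : RStrategy k n)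
    (hist : List (RRecord k n)) (A : RAdviceM k n) (L : RLossState k) : ℝ :=
  adviceDensity hist A * lossDensity ε s A L

/-- A (randomized) learner: given the observed history (most recent first) and the
current round's advice state, a density over which arm to pull. -/
def RLearner (k n : ℕ) := List (RObs k n) → RAdviceM k n → RArm k → ℝ

/-- The learner's values form probability distributions over arms. -/
def IsRLearner {k n : ℕ} (f : RLearner k n) : Prop :=
  ∀ h A, (∀ i, 0 ≤ f h A i) ∧ ∑ i : RArm k, f h A i = 1

/-- The learner's observation extracted from a full record: it sees the advice,
its pulled arm, and only the loss of the pulled arm. -/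
def obsOf {k n : ℕ} (r : RRecord k n) : RObs k n := (r.1, r.2.2, armLoss r.2.1 r.2.2)

/-- The history of the first `t` rounds of a trajectory, most recent first. -/
def histUpTo {k n T : ℕ} (g : Fin T → RRecord k n) (t : ℕ) : List (RRecord k n) :=
  ((List.ofFn g).take t).reverse

/-- The learner's observed history of the first `t` rounds, most recent first. -/
def obsHist {k n T : ℕ} (g : Fin T → RRecord k n) (t : ℕ) : List (RObs k n) :=
  (histUpTo g t).map obsOf

/-- Probability of a full `T`-round trajectory under strategy `s` and learner `L`
(product of the adversary's and the learner's densities, round by round). -/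
noncomputable def trajProb {k n : ℕ} (ε : ℝ) (s : RStrategy k n) (L : RLearner k n) (T : ℕ)
    (g : Fin T → RRecord k n) : ℝ :=
  ∏ t : Fin T,
    stratDensity ε s (histUpTo g t) (g t).1 (g t).2.1 *
      L (obsHist g t) (g t).1 (g t).2.2

/-- Expectation of a trajectory functional over the `T`-round interaction. -/
noncomputable def expectR {k n : ℕ} (ε : ℝ) (s : RStrategy k n) (L : RLearner k n) (T : ℕ)
    (f : (Fin T → RRecord k n) → ℝ) : ℝ :=
  ∑ g : Fin T → RRecord k n, trajProb ε s L T g * f g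

/-- The realized regret of a trajectory against expert `j`:
`Σ_t (ℓ_t(I_t) − ℓ_t(e_t(j)))`. -/
noncomputable def regretVs {k n T : ℕ} (g : Fin T → RRecord k n) (j : RExpert k n) : ℝ :=
  ∑ t : Fin T,
    (lossVal (armLoss (g t).2.1 (g t).2.2) - lossVal (armLoss (g t).2.1 (expertArm (g t).1 j)))

/-- The pseudo-regret over `T` rounds: `max_j E[Σ_t (ℓ_t(I_t) − ℓ_t(e_t(j)))]`. -/
noncomputable def pseudoRegret {k n : ℕ} (ε : ℝ) (s : RStrategy k n) (L : RLearner k n)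
    (T : ℕ) : ℝ :=
  ⨆ j : RExpert k n, expectR ε s L T fun g => regretVs g j

/-!
Compare the learner with the expert that carries the strategy's own index: expert `0` against
`S_0`, expert `(u*,v*)` against `S_{(u*,v*)}`. Given the past, the current advice and the pulled
arm, the current loss state is still distributed according to `lossDensity`, under which arm `0`
has mean loss `1/2 − ε/2`, the arms of a non-special batch have mean loss `1/2`, and the arms
`(u*, i)` have mean loss `1/2 ± ε`, the expert's arm being the one with `1/2 − ε`. So every round
costs the learner, in conditional expectation, nothing less than the comparator's loss, and at
least `ε/2` more whenever it leaves the special batch. Summing over the rounds gives the bound.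
-/

open Finset

section ReducedBwE

variable {k n : ℕ}

lemma adviceDensity_nonneg (hist : List (RRecord k n)) (A : RAdviceM k n) :
    0 ≤ adviceDensity hist A := by
  cases hist with
  | nil => exact pow_nonneg (by norm_num) _
  | cons r _ =>
    simp only [adviceDensity]
    exact prod_nonneg fun u _ => by split_ifs <;> positivity

lemma batchFactor_nonneg {ε : ℝ} (hε : |ε| ≤ 1 / 2) (s : RStrategy k n) (A : RAdviceM k n)
    (c : Fin k → Bool) (u : Fin k) : 0 ≤ batchFactor ε s A c u := by
  obtain ⟨hε₁, hε₂⟩ := abs_le.mp hε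
  rcases s with _ | ⟨u', v'⟩
  · norm_num [batchFactor]
  · simp only [batchFactor]
    split_ifs <;> linarith

lemma lossDensity_nonneg {ε : ℝ} (hε : |ε| ≤ 1 / 2) (s : RStrategy k n) (A : RAdviceM k n)
    (ls : RLossState k) : 0 ≤ lossDensity ε s A ls := by
  obtain ⟨hε₁, hε₂⟩ := abs_le.mp hε
  refine mul_nonneg ?_ (prod_nonneg fun u _ => batchFactor_nonneg hε s A ls.1 u)
  split_ifs <;> linarith

noncomputable def roundDensity (ε : ℝ) (s : RStrategy k n) (L : RLearner k n)
    (hist : List (RRecord k n)) (obsh : List (RObs k n)) (r : RRecord k n) : ℝ :=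
  stratDensity ε s hist r.1 r.2.1 * L obsh r.1 r.2.2

lemma roundDensity_nonneg {ε : ℝ} (hε : |ε| ≤ 1 / 2) (s : RStrategy k n) {L : RLearner k n}
    (hL : IsRLearner L) (hist : List (RRecord k n)) (obsh : List (RObs k n)) (r : RRecord k n) :
    0 ≤ roundDensity ε s L hist obsh r :=
  mul_nonneg (mul_nonneg (adviceDensity_nonneg _ _) (lossDensity_nonneg hε _ _ _))
    ((hL _ _).1 _)

lemma trajProb_nonneg {ε : ℝ} (hε : |ε| ≤ 1 / 2) (s : RStrategy k n) {L : RLearner k n}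
    (hL : IsRLearner L) (T : ℕ) (g : Fin T → RRecord k n) : 0 ≤ trajProb ε s L T g :=
  prod_nonneg fun _ _ => roundDensity_nonneg hε s hL _ _ _

lemma sum_prod_mul_apply {ι β R : Type*} [Fintype ι] [DecidableEq ι] [Fintype β] [CommSemiring R]
    (p : ι → β → R) (hp : ∀ i, ∑ b, p i b = 1) (i₀ : ι) (φ : β → R) :
    ∑ c : ι → β, (∏ i, p i (c i)) * φ (c i₀) = ∑ b, p i₀ b * φ b := by
  have hsplit : ∀ c : ι → β,
      (∏ i, p i (c i)) * φ (c i₀) = ∏ i, p i (c i) * if i₀ = i then φ (c i) else 1 := by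
    intro c
    rw [prod_mul_distrib, prod_ite_eq]
    simp
  have hfactor : ∀ i,
      ∑ b, p i b * (if i₀ = i then φ b else 1) = if i₀ = i then ∑ b, p i₀ b * φ b else 1 := by
    intro i
    by_cases h : i₀ = i
    · subst h; simp
    · simpa [h] using hp i
  rw [sum_congr rfl fun c _ => hsplit c,
    ← Fintype.prod_sum (f := fun i b => p i b * if i₀ = i then φ b else 1),
    prod_congr rfl fun i _ => hfactor i, prod_ite_eq]
  simp

lemma batchFactor_eq_const (ε : ℝ) (s : RStrategy k n) (A : RAdviceM k n) (c : Fin k → Bool)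
    (u : Fin k) : batchFactor ε s A c u = batchFactor ε s A (fun _ => c u) u := by
  cases s <;> rfl

lemma sum_batchFactor_const (ε : ℝ) (s : RStrategy k n) (A : RAdviceM k n) (u : Fin k) :
    ∑ b : Bool, batchFactor ε s A (fun _ => b) u = 1 := by
  rcases s with _ | ⟨u', v'⟩
  · norm_num [batchFactor]
  · by_cases hu : u = u'
    · subst hu
      cases hA : A u v' <;> norm_num [batchFactor, hA]
    · norm_num [batchFactor, hu]

lemma sum_prod_batchFactor (ε : ℝ) (s : RStrategy k n) (A : RAdviceM k n) :
    ∑ c : Fin k → Bool, ∏ u, batchFactor ε s A c u = 1 := by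
  simp_rw [batchFactor_eq_const ε s A _]
  rw [← Fintype.prod_sum (f := fun u b => batchFactor ε s A (fun _ => b) u)]
  exact prod_eq_one fun u _ => sum_batchFactor_const ε s A u

lemma sum_prod_batchFactor_mul_apply (ε : ℝ) (s : RStrategy k n) (A : RAdviceM k n)
    (u : Fin k) (φ : Bool → ℝ) :
    ∑ c : Fin k → Bool, (∏ u', batchFactor ε s A c u') * φ (c u)
      = ∑ b : Bool, batchFactor ε s A (fun _ => b) u * φ b := by
  simp_rw [batchFactor_eq_const ε s A _]
  exact sum_prod_mul_apply _ (sum_batchFactor_const ε s A) u φ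

lemma sum_lossDensity_apply_mk (ε : ℝ) (s : RStrategy k n) (A : RAdviceM k n)
    (c : Fin k → Bool) : ∑ b : Bool, lossDensity ε s A (c, b) = ∏ u, batchFactor ε s A c u := by
  simp only [lossDensity, ← sum_mul, Fintype.sum_bool, if_true, Bool.false_eq_true, if_false]
  ring

lemma sum_lossDensity (ε : ℝ) (s : RStrategy k n) (A : RAdviceM k n) :
    ∑ ls : RLossState k, lossDensity ε s A ls = 1 := by
  rw [Fintype.sum_prod_type]
  simp only [sum_lossDensity_apply_mk, sum_prod_batchFactor]

lemma card_mul_half_pow (m : ℕ) : (Fintype.card (Fin m → Bool) : ℝ) * (1 / 2) ^ m = 1 := by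
  simp

lemma sum_adviceDensity (hist : List (RRecord k n)) :
    ∑ A : RAdviceM k n, adviceDensity hist A = 1 := by
  cases hist with
  | nil =>
    simp only [adviceDensity]
    rw [sum_const, card_univ, nsmul_eq_mul, Fintype.card_pi, prod_const,
      card_univ, Fintype.card_fin, pow_mul']
    push_cast
    rw [← mul_pow, card_mul_half_pow, one_pow]
  | cons r _ =>
    simp only [adviceDensity]
    rw [← Fintype.prod_sum (f := fun u (x : Fin n → Bool) =>
      if armBatch r.2.2 = some u then ((1 : ℝ) / 2) ^ n else if x = r.1 u then 1 else 0)]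
    refine prod_eq_one fun u _ => ?_
    split_ifs
    · rw [sum_const, card_univ, nsmul_eq_mul, card_mul_half_pow]
    · simp

lemma sum_roundDensity (ε : ℝ) (s : RStrategy k n) {L : RLearner k n} (hL : IsRLearner L)
    (hist : List (RRecord k n)) (obsh : List (RObs k n)) :
    ∑ r, roundDensity ε s L hist obsh r = 1 := by
  simp only [roundDensity, stratDensity]
  rw [Fintype.sum_prod_type]
  refine (sum_congr rfl fun A _ => ?_).trans (sum_adviceDensity hist)
  rw [Fintype.sum_prod_type]
  simp only [← mul_sum, (hL obsh A).2, mul_one, sum_lossDensity]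

noncomputable def meanLoss (ε : ℝ) (s : RStrategy k n) (A : RAdviceM k n) : RArm k → ℝ
  | none => 1 / 2 - ε / 2
  | some (u, i) => batchFactor ε s A (fun _ => !i) u

lemma sum_lossDensity_mul_lossVal (ε : ℝ) (s : RStrategy k n) (A : RAdviceM k n) (a : RArm k) :
    ∑ ls : RLossState k, lossDensity ε s A ls * lossVal (armLoss ls a) = meanLoss ε s A a := by
  rcases a with _ | ⟨u, i⟩
  · rw [Fintype.sum_prod_type]
    simp only [lossDensity, armLoss, lossVal, Fintype.sum_bool, if_true, Bool.false_eq_true,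
      if_false, mul_one, mul_zero, add_zero, ← mul_sum, sum_prod_batchFactor, meanLoss]
  · have hsum_arm0 : ∀ c : Fin k → Bool,
        ∑ b : Bool, lossDensity ε s A (c, b) * lossVal (armLoss (c, b) (some (u, i)))
          = (∏ u', batchFactor ε s A c u') * lossVal (if i = c u then false else true) := by
      intro c
      rw [← sum_lossDensity_apply_mk]
      exact (sum_mul (univ : Finset Bool) (fun b => lossDensity ε s A (c, b)) _).symm
    rw [Fintype.sum_prod_type, sum_congr rfl fun c _ => hsum_arm0 c]
    rw [sum_prod_batchFactor_mul_apply ε s A u fun x => lossVal (if i = x then false else true)]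
    cases i <;> simp [meanLoss, lossVal]

noncomputable def roundExcess (ε : ℝ) (s : RStrategy k n) (r : RRecord k n) : ℝ :=
  lossVal (armLoss r.2.1 r.2.2) - lossVal (armLoss r.2.1 (expertArm r.1 s))
    - ε / 2 * if armBatch r.2.2 = specialBatch s then 0 else 1

lemma meanLoss_expertArm_add_le {ε : ℝ} (hε : 0 ≤ ε) (s : RStrategy k n) (A : RAdviceM k n)
    (a : RArm k) :
    meanLoss ε s A (expertArm A s) + ε / 2 * (if armBatch a = specialBatch s then 0 else 1)
      ≤ meanLoss ε s A a := by
  rcases s with _ | ⟨u', v'⟩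
  · rcases a with _ | ⟨u, i⟩
    · simp [meanLoss, expertArm, armBatch, specialBatch]
    · simp [meanLoss, expertArm, armBatch, specialBatch, batchFactor]
  · have hexpert : meanLoss ε (some (u', v')) A (expertArm A (some (u', v'))) = 1 / 2 - ε := by
      cases hA : A u' v' <;> simp [meanLoss, expertArm, batchFactor, hA]
    rw [hexpert]
    rcases a with _ | ⟨u, i⟩
    · simp [meanLoss, armBatch, specialBatch]
      linarith
    · by_cases hu : u = u'
      · subst hu
        simp only [meanLoss, armBatch, specialBatch, Option.map_some, if_true, batchFactor]
        split_ifs <;> linarith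
      · simp [meanLoss, armBatch, specialBatch, batchFactor, hu]
        linarith

lemma sum_lossDensity_mul_roundExcess_nonneg {ε : ℝ} (hε : 0 ≤ ε) (s : RStrategy k n)
    (A : RAdviceM k n) (a : RArm k) :
    0 ≤ ∑ ls : RLossState k, lossDensity ε s A ls * roundExcess ε s (A, ls, a) := by
  have hsplit : ∑ ls : RLossState k, lossDensity ε s A ls * roundExcess ε s (A, ls, a)
      = ∑ ls : RLossState k, lossDensity ε s A ls * lossVal (armLoss ls a)
        - ∑ ls : RLossState k, lossDensity ε s A ls * lossVal (armLoss ls (expertArm A s))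
        - (∑ ls : RLossState k, lossDensity ε s A ls)
          * (ε / 2 * if armBatch a = specialBatch s then 0 else 1) := by
    rw [sum_mul, ← sum_sub_distrib, ← sum_sub_distrib]
    exact sum_congr rfl fun ls _ => by rw [roundExcess]; ring
  rw [hsplit, sum_lossDensity_mul_lossVal, sum_lossDensity_mul_lossVal, sum_lossDensity, one_mul]
  linarith [meanLoss_expertArm_add_le hε s A a]

lemma sum_roundDensity_mul_nonneg {ε : ℝ} (s : RStrategy k n)
    {L : RLearner k n} (hL : IsRLearner L) {d : RRecord k n → ℝ}
    (hd : ∀ A a, 0 ≤ ∑ ls : RLossState k, lossDensity ε s A ls * d (A, ls, a))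
    (hist : List (RRecord k n)) (obsh : List (RObs k n)) :
    0 ≤ ∑ r, roundDensity ε s L hist obsh r * d r := by
  rw [Fintype.sum_prod_type]
  refine sum_nonneg fun A _ => ?_
  rw [Fintype.sum_prod_type, sum_comm]
  refine sum_nonneg fun a _ => ?_
  have hfactor : ∑ ls, roundDensity ε s L hist obsh (A, ls, a) * d (A, ls, a)
      = adviceDensity hist A * L obsh A a * ∑ ls, lossDensity ε s A ls * d (A, ls, a) := by
    rw [mul_sum]
    exact sum_congr rfl fun ls _ => by simp only [roundDensity, stratDensity]; ring
  rw [hfactor]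
  exact mul_nonneg (mul_nonneg (adviceDensity_nonneg _ _) ((hL _ _).1 _)) (hd A a)

lemma histUpTo_snoc {T : ℕ} (g : Fin T → RRecord k n) (r : RRecord k n) {t : ℕ} (ht : t ≤ T) :
    histUpTo (Fin.snoc g r) t = histUpTo g t := by
  unfold histUpTo
  rw [List.ofFn_succ', List.concat_eq_append, List.take_append_of_le_length (by simpa using ht)]
  simp [Fin.snoc_castSucc]

lemma trajProb_snoc (ε : ℝ) (s : RStrategy k n) (L : RLearner k n) {T : ℕ}
    (g : Fin T → RRecord k n) (r : RRecord k n) :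
    trajProb ε s L (T + 1) (Fin.snoc g r)
      = trajProb ε s L T g * roundDensity ε s L (histUpTo g T) (obsHist g T) r := by
  have hpast : ∀ t : Fin T, histUpTo (Fin.snoc g r) t = histUpTo g t :=
    fun t => histUpTo_snoc g r t.is_lt.le
  simp only [trajProb, obsHist, Fin.prod_univ_castSucc, Fin.snoc_castSucc, Fin.snoc_last,
    Fin.val_castSucc, Fin.val_last, hpast, histUpTo_snoc g r le_rfl]
  rfl

lemma expectR_succ (ε : ℝ) (s : RStrategy k n) (L : RLearner k n) {T : ℕ}
    (f : (Fin (T + 1) → RRecord k n) → ℝ) :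
    expectR ε s L (T + 1) f
      = ∑ g, trajProb ε s L T g *
          ∑ r, roundDensity ε s L (histUpTo g T) (obsHist g T) r * f (Fin.snoc g r) := by
  rw [expectR, ← (Fin.snocEquiv fun _ => RRecord k n).sum_comp, Fintype.sum_prod_type, sum_comm]
  simp only [Fin.snocEquiv, Equiv.coe_fn_mk, trajProb_snoc, mul_sum, mul_assoc]

/-- Given the past and the current advice, the loss state of a round is independent of the
pulled arm, so a round functional whose mean over the loss state is nonnegative for every advice
and arm has nonnegative expectation. -/
lemma expectR_apply_nonneg {ε : ℝ} (hε : |ε| ≤ 1 / 2) (s : RStrategy k n) {L : RLearner k n}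
    (hL : IsRLearner L) {d : RRecord k n → ℝ}
    (hd : ∀ A a, 0 ≤ ∑ ls : RLossState k, lossDensity ε s A ls * d (A, ls, a)) :
    ∀ (T : ℕ) (t : Fin T), 0 ≤ expectR ε s L T fun g => d (g t)
  | 0, t => t.elim0
  | T + 1, t => by
    rw [expectR_succ]
    induction t using Fin.lastCases with
    | last =>
      simp only [Fin.snoc_last]
      exact sum_nonneg fun g _ =>
        mul_nonneg (trajProb_nonneg hε s hL T g) (sum_roundDensity_mul_nonneg s hL hd _ _)
    | cast t =>
      simp only [Fin.snoc_castSucc, ← sum_mul, sum_roundDensity ε s hL, one_mul]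
      exact expectR_apply_nonneg hε s hL hd T t

lemma regretVs_sub_eq_sum_roundExcess (ε : ℝ) (s : RStrategy k n) {T : ℕ}
    (g : Fin T → RRecord k n) :
    regretVs g s - ε / 2 * ((T : ℝ) - #{t | armBatch (g t).2.2 = specialBatch s})
      = ∑ t, roundExcess ε s (g t) := by
  have hcount : (T : ℝ) - #{t | armBatch (g t).2.2 = specialBatch s}
      = ∑ t, if armBatch (g t).2.2 = specialBatch s then 0 else 1 := by
    have hsplit := card_filter_add_card_filter_not (s := univ)
      (fun t => armBatch (g t).2.2 = specialBatch s)
    rw [card_univ, Fintype.card_fin] at hsplit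
    rw [sum_ite, sum_const_zero, zero_add, sum_const, nsmul_one, sub_eq_iff_eq_add']
    exact_mod_cast hsplit.symm
  rw [hcount, regretVs, mul_sum, ← sum_sub_distrib]
  rfl

lemma sum_expectR_roundExcess (ε : ℝ) (s : RStrategy k n) (L : RLearner k n) (T : ℕ) :
    ∑ t : Fin T, expectR ε s L T (fun g => roundExcess ε s (g t))
      = expectR ε s L T (fun g => regretVs g s)
        - ε / 2 * expectR ε s L T
            (fun g => (T : ℝ) - #{t | armBatch (g t).2.2 = specialBatch s}) := by
  simp only [expectR, mul_sum]
  rw [sum_comm, ← sum_sub_distrib]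
  refine sum_congr rfl fun g _ => ?_
  rw [← mul_sum, ← regretVs_sub_eq_sum_roundExcess]
  ring

end ReducedBwE

theorem stmt3_general (k n : ℕ) (ε : ℝ) (hε : 0 < ε) (hε' : ε ≤ 0.1)
    (s : RStrategy k n) (Tstar : ℕ) (L : RLearner k n) (hL : IsRLearner L) :
    ε / 2 *
        expectR ε s L Tstar (fun g =>
          (Tstar : ℝ) -
            ((Finset.univ.filter fun t : Fin Tstar =>
                armBatch ((g t).2.2) = specialBatch s).card : ℝ))
      ≤ pseudoRegret ε s L Tstar := by
  have hε_abs : |ε| ≤ 1 / 2 := abs_le.mpr ⟨by linarith, by norm_num at hε'; linarith⟩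
  have hexcess_nonneg : 0 ≤ ∑ t, expectR ε s L Tstar fun g => roundExcess ε s (g t) :=
    sum_nonneg fun t _ => expectR_apply_nonneg hε_abs s hL
      (sum_lossDensity_mul_roundExcess_nonneg hε.le s) Tstar t
  calc _ ≤ expectR ε s L Tstar (fun g => regretVs g s) := by
        linarith [sum_expectR_roundExcess ε s L Tstar]
    _ ≤ pseudoRegret ε s L Tstar :=
      le_ciSup (f := fun j => expectR ε s L Tstar fun g => regretVs g j)
        (Set.finite_range _).bddAbove s

/-- against any strategy `s` of the pool with special batch `u*`, the
pseudo-regret over `T*` rounds of any learner is at least `(ε/2)·E[T* − T_{u*}]`,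
where `T_{u*}` is the number of rounds in which an arm of batch `u*` is pulled. -/
theorem stmt3 (k n : ℕ) (hk : 1 ≤ k) (hn : 10 ≤ n) (ε : ℝ) (hε : 0 < ε) (hε' : ε ≤ 0.1)
    (s : RStrategy k n) (Tstar : ℕ) (L : RLearner k n) (hL : IsRLearner L) :
    ε / 2 *
        expectR ε s L Tstar (fun g =>
          (Tstar : ℝ) -
            ((Finset.univ.filter fun t : Fin Tstar =>
                armBatch ((g t).2.2) = specialBatch s).card : ℝ))
      ≤ pseudoRegret ε s L Tstar :=
  stmt3_general k n ε hε hε' s Tstar L hL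
end

section
/- Let α be a finite type, let Q be a probability mass function on α with Q(g) > 0 for all g ∈ α, and let P_1, …, P_n be probability mass functions on α. Then D_KL( (1/n)·Σ_{v=1}^n P_v ‖ Q ) ≤ (1/n)·Σ_{v*=1}^n ln( (1/n)·Σ_{v=1}^n Σ_{g ∈ α} P_{v*}(g)·P_v(g)/Q(g) ). -/
open scoped BigOperators

/-- Kullback–Leibler divergence between two probability mass functions on a finite type
(with the convention `0 · ln 0 = 0`, which holds definitionally here since
`Real.log 0 = 0` and `0 * x = 0`). -/
noncomputable def klDiv {α : Type*} [Fintype α] (P Q : α → ℝ) : ℝ :=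
  ∑ g, P g * Real.log (P g / Q g)

/-!
Writing `M = (1/n) Σ_v P_v` for the mixture, `D_KL(M ‖ Q)` splits as the average over `v*` of
`E_{P_{v*}}[ln (M/Q)]`, and by Jensen's inequality for the concave logarithm each of these is at
most `ln E_{P_{v*}}[M/Q]`, which is exactly the argument of the logarithm on the right.
-/

open Finset Real

/-- Jensen's inequality for `log`, where points of zero weight may lie outside its domain. -/
theorem Real.sum_mul_log_le_log_sum_mul {ι : Type*} (s : Finset ι) {p f : ι → ℝ}
    (hp : ∀ i ∈ s, 0 ≤ p i) (hp1 : ∑ i ∈ s, p i = 1) (hf : ∀ i ∈ s, p i ≠ 0 → 0 < f i) :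
    ∑ i ∈ s, p i * log (f i) ≤ log (∑ i ∈ s, p i * f i) := by
  classical
  have restrict {h : ι → ℝ} : ∑ i ∈ s with p i ≠ 0, p i * h i = ∑ i ∈ s, p i * h i :=
    sum_filter_of_ne fun _ _ => left_ne_zero_of_mul
  rw [← restrict, ← restrict]
  rw [← sum_filter_ne_zero] at hp1
  exact strictConcaveOn_log_Ioi.concaveOn.le_map_sum (fun i hi => hp i (mem_filter.1 hi).1) hp1
    fun i hi => hf i (mem_filter.1 hi).1 (mem_filter.1 hi).2

theorem klDiv_const_mul_sum {α ι : Type*} [Fintype α] [Fintype ι] (c : ℝ) (P : ι → α → ℝ)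
    (Q : α → ℝ) :
    klDiv (fun g => c * ∑ v, P v g) Q
      = c * ∑ v, ∑ g, P v g * log (c * (∑ w, P w g) / Q g) := by
  simp only [klDiv, mul_assoc, sum_mul]
  rw [← mul_sum, sum_comm]

theorem sum_mul_const_mul_sum_div {α ι : Type*} [Fintype α] [Fintype ι] (c : ℝ)
    (P : ι → α → ℝ) (Q p : α → ℝ) :
    ∑ g, p g * (c * (∑ v, P v g) / Q g) = c * ∑ v, ∑ g, p g * (P v g / Q g) := by
  simp only [mul_sum, sum_div, mul_div_assoc]
  rw [sum_comm]
  exact sum_congr rfl fun _ _ => sum_congr rfl fun _ _ => by ring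

theorem stmt8_general {α : Type*} [Fintype α] (n : ℕ)
    (Q : α → ℝ) (hQpos : ∀ g, 0 < Q g)
    (P : Fin n → α → ℝ) (hPnn : ∀ v g, 0 ≤ P v g) (hP1 : ∀ v, ∑ g, P v g = 1) :
    klDiv (fun g => (1 / (n : ℝ)) * ∑ v, P v g) Q
      ≤ (1 / (n : ℝ)) * ∑ vstar : Fin n,
          Real.log ((1 / (n : ℝ)) * ∑ v : Fin n, ∑ g, P vstar g * (P v g / Q g)) := by
  rw [klDiv_const_mul_sum]
  simp_rw [← sum_mul_const_mul_sum_div]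
  gcongr with w
  refine sum_mul_log_le_log_sum_mul _ (fun g _ => hPnn w g) (hP1 w) fun g _ hPwg => ?_
  have hn : (0 : ℝ) < n := by exact_mod_cast w.pos
  have hmix : 0 < ∑ v, P v g :=
    (lt_of_le_of_ne (hPnn w g) (Ne.symm hPwg)).trans_le
      (single_le_sum (fun v _ => hPnn v g) (mem_univ w))
  exact div_pos (mul_pos (by positivity) hmix) (hQpos g)

/-- for probability mass functions `P_1, …, P_n` and an everywhere-positive
probability mass function `Q` on a finite type,
`D_KL((1/n)·Σ_v P_v ‖ Q) ≤ (1/n)·Σ_{v*} ln((1/n)·Σ_v E_{P_{v*}}[P_v/Q])`. -/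
theorem stmt8 {α : Type*} [Fintype α] (n : ℕ) (hn : 1 ≤ n)
    (Q : α → ℝ) (hQpos : ∀ g, 0 < Q g) (hQ1 : ∑ g, Q g = 1)
    (P : Fin n → α → ℝ) (hPnn : ∀ v g, 0 ≤ P v g) (hP1 : ∀ v, ∑ g, P v g = 1) :
    klDiv (fun g => (1 / (n : ℝ)) * ∑ v, P v g) Q
      ≤ (1 / (n : ℝ)) * ∑ vstar : Fin n,
          Real.log ((1 / (n : ℝ)) * ∑ v : Fin n, ∑ g, P vstar g * (P v g / Q g)) :=
  stmt8_general n Q hQpos P hPnn hP1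
end
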